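/- arXiv:1209.6045 — 4 statements merged into one kernel-verified Lean document; each statement's English description precedes it below -/
import Mathlib

section
/- Identifying T₁(E) with G₁/Δ as below, the map sending the class (a,b,c,d)Δ to (a/b, b/c) is a well-defined group isomorphism from T₁(E) onto Eˣ × Eˣ, and it is Galois-equivariant when σ acts on Eˣ × Eˣ by σ·(w,z) := (w̄⁻¹, z̄⁻¹). Consequently, this isomorphism carries the σ-fixed subgroup T₁(E)^σ onto ker(N_{E/F}) × ker(N_{E/F}) = {(w,z) ∈ Eˣ × Eˣ : w·w̄ = 1 and z·z̄ = 1}. -/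
/-- The automorphism of `Eˣ` induced by a field automorphism `σ` of `E`. -/
def su {F E : Type*} [Field F] [Field E] [Algebra F E] (σ : E ≃ₐ[F] E) : Eˣ ≃* Eˣ :=
  Units.mapEquiv σ.toRingEquiv.toMulEquiv

/-- The subgroup `G₁ = {(a,b,c,d) ∈ (Eˣ)⁴ : a·d = b·c}`. -/
def G1 (E : Type*) [Field E] : Subgroup (Eˣ × Eˣ × Eˣ × Eˣ) where
  carrier := {p | p.1 * p.2.2.2 = p.2.1 * p.2.2.1}
  one_mem' := rfl
  mul_mem' := by
    intro p q hp hq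
    have hp' : p.1 * p.2.2.2 = p.2.1 * p.2.2.1 := hp
    have hq' : q.1 * q.2.2.2 = q.2.1 * q.2.2.1 := hq
    show p.1 * q.1 * (p.2.2.2 * q.2.2.2) = p.2.1 * q.2.1 * (p.2.2.1 * q.2.2.1)
    rw [mul_mul_mul_comm p.1 q.1, hp', hq', mul_mul_mul_comm]
  inv_mem' := by
    intro p hp
    have hp' : p.1 * p.2.2.2 = p.2.1 * p.2.2.1 := hp
    show p.1⁻¹ * p.2.2.2⁻¹ = p.2.1⁻¹ * p.2.2.1⁻¹
    rw [← mul_inv, ← mul_inv, hp']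

/-- The diagonal embedding `Eˣ → (Eˣ)⁴`. -/
def diagHom (E : Type*) [Field E] : Eˣ →* Eˣ × Eˣ × Eˣ × Eˣ where
  toFun x := (x, x, x, x)
  map_one' := rfl
  map_mul' _ _ := rfl

/-- The diagonal subgroup `Δ ≤ (Eˣ)⁴`. -/
def Delta (E : Type*) [Field E] : Subgroup (Eˣ × Eˣ × Eˣ × Eˣ) := (diagHom E).range

/-- The order-reversal `(a,b,c,d) ↦ (d,c,b,a)` of `(Eˣ)⁴`. -/
def rev4 (E : Type*) [Field E] : (Eˣ × Eˣ × Eˣ × Eˣ) ≃* (Eˣ × Eˣ × Eˣ × Eˣ) where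
  toFun p := (p.2.2.2, p.2.2.1, p.2.1, p.1)
  invFun p := (p.2.2.2, p.2.2.1, p.2.1, p.1)
  left_inv _ := rfl
  right_inv _ := rfl
  map_mul' _ _ := rfl

/-- Componentwise application of an automorphism of `Eˣ` to `(Eˣ)⁴`. -/
def map4 {E : Type*} [Field E] (e : Eˣ ≃* Eˣ) :
    (Eˣ × Eˣ × Eˣ × Eˣ) ≃* (Eˣ × Eˣ × Eˣ × Eˣ) :=
  e.prodCongr (e.prodCongr (e.prodCongr e))

/-- The Galois action `(a,b,c,d) ↦ (σ(d), σ(c), σ(b), σ(a))` on `(Eˣ)⁴`. -/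
def sAut {F E : Type*} [Field F] [Field E] [Algebra F E] (σ : E ≃ₐ[F] E) :
    (Eˣ × Eˣ × Eˣ × Eˣ) ≃* (Eˣ × Eˣ × Eˣ × Eˣ) :=
  (rev4 E).trans (map4 (su σ))

/-- The Galois action `σ·(w, z) = (σ(w)⁻¹, σ(z)⁻¹)` on `Eˣ × Eˣ`. -/
def sPair {F E : Type*} [Field F] [Field E] [Algebra F E] (σ : E ≃ₐ[F] E) :
    (Eˣ × Eˣ) ≃* (Eˣ × Eˣ) :=
  MulEquiv.prodCongr ((su σ).trans (MulEquiv.inv Eˣ)) ((su σ).trans (MulEquiv.inv Eˣ))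

/-- The homomorphism `G₁ → Eˣ × Eˣ`, `(a,b,c,d) ↦ (a/b, b/c)`. -/
def psiHom (E : Type*) [Field E] : G1 E →* Eˣ × Eˣ where
  toFun g := ((g : Eˣ × Eˣ × Eˣ × Eˣ).1 / (g : Eˣ × Eˣ × Eˣ × Eˣ).2.1,
      (g : Eˣ × Eˣ × Eˣ × Eˣ).2.1 / (g : Eˣ × Eˣ × Eˣ × Eˣ).2.2.1)
  map_one' := by simp
  map_mul' g h := by
    simp only [Subgroup.coe_mul, Prod.fst_mul, Prod.snd_mul, Prod.mk_mul_mk, Prod.mk.injEq]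
    exact ⟨(div_mul_div_comm _ _ _ _).symm, (div_mul_div_comm _ _ _ _).symm⟩

lemma psiHom_ker (E : Type*) [Field E] :
    (Delta E).subgroupOf (G1 E) = (psiHom E).ker := by
  ext g
  constructor
  · rintro ⟨x, hx⟩
    have h1 : (g : Eˣ × Eˣ × Eˣ × Eˣ) = (x, x, x, x) := hx.symm
    show psiHom E g = 1
    simp [psiHom, h1]
  · intro hg
    have h1 : (g : Eˣ × Eˣ × Eˣ × Eˣ).1 / (g : Eˣ × Eˣ × Eˣ × Eˣ).2.1 = 1 :=
      congrArg Prod.fst hg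
    have h2 : (g : Eˣ × Eˣ × Eˣ × Eˣ).2.1 / (g : Eˣ × Eˣ × Eˣ × Eˣ).2.2.1 = 1 :=
      congrArg Prod.snd hg
    rw [div_eq_one] at h1 h2
    have hG : (g : Eˣ × Eˣ × Eˣ × Eˣ).1 * (g : Eˣ × Eˣ × Eˣ × Eˣ).2.2.2
        = (g : Eˣ × Eˣ × Eˣ × Eˣ).2.1 * (g : Eˣ × Eˣ × Eˣ × Eˣ).2.2.1 := g.2
    rw [h1, h2] at hG
    have h3 : (g : Eˣ × Eˣ × Eˣ × Eˣ).2.2.2 = (g : Eˣ × Eˣ × Eˣ × Eˣ).2.2.1 :=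
      mul_left_cancel hG
    exact ⟨(g : Eˣ × Eˣ × Eˣ × Eˣ).2.2.1, by
      show ((g : Eˣ × Eˣ × Eˣ × Eˣ).2.2.1, (g : Eˣ × Eˣ × Eˣ × Eˣ).2.2.1,
        (g : Eˣ × Eˣ × Eˣ × Eˣ).2.2.1, (g : Eˣ × Eˣ × Eˣ × Eˣ).2.2.1)
          = (g : Eˣ × Eˣ × Eˣ × Eˣ)
      ext <;> simp [h1, h2, h3]⟩

lemma psiHom_surj (E : Type*) [Field E] : Function.Surjective (psiHom E) := by
  rintro ⟨w, z⟩
  refine ⟨⟨(w * z, z, 1, w⁻¹), ?_⟩, ?_⟩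
  · show w * z * w⁻¹ = z * 1
    rw [mul_one, mul_comm w z, mul_inv_cancel_right]
  · show (w * z / z, z / 1) = (w, z)
    simp

lemma sAut_mem {F E : Type*} [Field F] [Field E] [Algebra F E] (σ : E ≃ₐ[F] E)
    (g : G1 E) : sAut σ (g : Eˣ × Eˣ × Eˣ × Eˣ) ∈ G1 E := by
  obtain ⟨⟨a, b, c, d⟩, hg⟩ := g
  have hg' : a * d = b * c := hg
  show su σ d * su σ a = su σ c * su σ b
  rw [← map_mul, ← map_mul, mul_comm d a, mul_comm c b, hg']

/-- identifying `T₁(E) = G₁/Δ`, the map `(a,b,c,d)Δ ↦ (a/b, b/c)` is a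
well-defined group isomorphism onto `Eˣ × Eˣ`, Galois-equivariant for the action
`σ·(w,z) = (w̄⁻¹, z̄⁻¹)`, and it carries the `σ`-fixed subgroup `T₁(E)^σ` onto
`ker(N_{E/F}) × ker(N_{E/F}) = {(w,z) : w·w̄ = 1 ∧ z·z̄ = 1}`. -/
theorem statement_0 {F E : Type*} [Field F] [Field E] [Algebra F E] [IsGalois F E]
    (hdeg : Module.finrank F E = 2) (σ : E ≃ₐ[F] E) (hσ : σ ≠ 1) :
    ∃ φ : (G1 E ⧸ ((Delta E).subgroupOf (G1 E))) ≃* Eˣ × Eˣ,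
      (∀ g : G1 E,
        φ (QuotientGroup.mk g) =
          ((g : Eˣ × Eˣ × Eˣ × Eˣ).1 / (g : Eˣ × Eˣ × Eˣ × Eˣ).2.1,
            (g : Eˣ × Eˣ × Eˣ × Eˣ).2.1 / (g : Eˣ × Eˣ × Eˣ × Eˣ).2.2.1)) ∧
      (∀ g : G1 E, ∀ hg : sAut σ (g : Eˣ × Eˣ × Eˣ × Eˣ) ∈ G1 E,
        φ (QuotientGroup.mk (⟨sAut σ (g : Eˣ × Eˣ × Eˣ × Eˣ), hg⟩ : G1 E)) =
          sPair σ (φ (QuotientGroup.mk g))) ∧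
      φ '' {x : G1 E ⧸ ((Delta E).subgroupOf (G1 E)) |
          ∀ g : G1 E, QuotientGroup.mk g = x →
            ∀ hg : sAut σ (g : Eˣ × Eˣ × Eˣ × Eˣ) ∈ G1 E,
              QuotientGroup.mk (⟨sAut σ (g : Eˣ × Eˣ × Eˣ × Eˣ), hg⟩ : G1 E) = x} =
        {p : Eˣ × Eˣ | p.1 * su σ p.1 = 1 ∧ p.2 * su σ p.2 = 1} := by
  set φ : (G1 E ⧸ ((Delta E).subgroupOf (G1 E))) ≃* Eˣ × Eˣ :=
    (QuotientGroup.quotientMulEquivOfEq (psiHom_ker E)).trans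
      (QuotientGroup.quotientKerEquivOfSurjective _ (psiHom_surj E)) with hφ
  have hmk : ∀ g : G1 E,
      φ (QuotientGroup.mk g) =
        ((g : Eˣ × Eˣ × Eˣ × Eˣ).1 / (g : Eˣ × Eˣ × Eˣ × Eˣ).2.1,
          (g : Eˣ × Eˣ × Eˣ × Eˣ).2.1 / (g : Eˣ × Eˣ × Eˣ × Eˣ).2.2.1) := fun g => rfl
  have hequiv : ∀ g : G1 E, ∀ hg : sAut σ (g : Eˣ × Eˣ × Eˣ × Eˣ) ∈ G1 E,
      φ (QuotientGroup.mk (⟨sAut σ (g : Eˣ × Eˣ × Eˣ × Eˣ), hg⟩ : G1 E)) =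
        sPair σ (φ (QuotientGroup.mk g)) := by
    intro g hg
    rw [hmk, hmk]
    obtain ⟨⟨a, b, c, d⟩, hgm⟩ := g
    have hgm' : a * d = b * c := hgm
    show (su σ d / su σ c, su σ c / su σ b)
      = ((su σ (a / b))⁻¹, (su σ (b / c))⁻¹)
    rw [map_div, map_div, inv_div, inv_div]
    have h4 : su σ d / su σ c = su σ b / su σ a := by
      rw [div_eq_div_iff_mul_eq_mul, ← map_mul, ← map_mul, mul_comm d a, hgm']
    exact Prod.ext h4 rfl
  refine ⟨φ, hmk, hequiv, ?_⟩
  ext p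
  simp only [Set.mem_image, Set.mem_setOf_eq]
  constructor
  · rintro ⟨x, hx, rfl⟩
    obtain ⟨g, rfl⟩ : ∃ g : G1 E, QuotientGroup.mk g = x :=
      QuotientGroup.mk_surjective x
    have h1 := hx g rfl (sAut_mem σ g)
    have h2 := hequiv g (sAut_mem σ g)
    rw [h1] at h2
    have h3 : (φ (QuotientGroup.mk g)).1 * su σ (φ (QuotientGroup.mk g)).1 = 1 ∧
        (φ (QuotientGroup.mk g)).2 * su σ (φ (QuotientGroup.mk g)).2 = 1 := by
      have e1 : (φ (QuotientGroup.mk g)).1 = (su σ (φ (QuotientGroup.mk g)).1)⁻¹ :=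
        congrArg Prod.fst h2
      have e2 : (φ (QuotientGroup.mk g)).2 = (su σ (φ (QuotientGroup.mk g)).2)⁻¹ :=
        congrArg Prod.snd h2
      exact ⟨eq_inv_iff_mul_eq_one.mp e1, eq_inv_iff_mul_eq_one.mp e2⟩
    exact h3
  · rintro ⟨h1, h2⟩
    refine ⟨φ.symm p, ?_, by simp⟩
    intro g hgx hg
    apply φ.injective
    rw [hequiv g hg, hgx]
    have hp : φ (φ.symm p) = p := φ.apply_symm_apply p
    rw [hp]
    have e1 : (su σ p.1)⁻¹ = p.1 := by
      rw [inv_eq_iff_mul_eq_one, mul_comm]; exact h1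
    have e2 : (su σ p.2)⁻¹ = p.2 := by
      rw [inv_eq_iff_mul_eq_one, mul_comm]; exact h2
    show ((su σ p.1)⁻¹, (su σ p.2)⁻¹) = p
    rw [e1, e2]
end

section
/- Let Γ be a group acting by automorphisms on a group G, and let T be an abelian, Γ-stable subgroup of G such that the centralizer in G of the fixed subgroup T^Γ := {t ∈ T : γ·t = t for all γ ∈ Γ} equals T. Then the normalizer of T^Γ in G equals {n ∈ G : n normalizes T and n⁻¹·(γ·n) ∈ T for all γ ∈ Γ}. In particular, N_G(T^Γ) ⊆ N_G(T), and the quotient N_G(T^Γ)/T is exactly the subgroup of Γ-fixed cosets in N_G(T)/T (where Γ acts on N_G(T)/T via its action on G). -/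
/-- The fixed subgroup `T^Γ` of a `Γ`-stable subgroup `T ≤ G` under an action of `Γ` on `G`
by automorphisms. -/
def fixedSub (Γ : Type*) {G : Type*} [Group Γ] [Group G] [MulDistribMulAction Γ G]
    (T : Subgroup G) : Subgroup G where
  carrier := {t | t ∈ T ∧ ∀ γ : Γ, γ • t = t}
  one_mem' := ⟨T.one_mem, fun γ => smul_one γ⟩
  mul_mem' := fun {x y} hx hy =>
    ⟨T.mul_mem hx.1 hy.1, fun γ => by rw [smul_mul', hx.2 γ, hy.2 γ]⟩
  inv_mem' := fun {x} hx => ⟨T.inv_mem hx.1, fun γ => by rw [smul_inv', hx.2 γ]⟩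

/-- let `Γ` act by automorphisms on `G`, and let `T ≤ G` be abelian and
`Γ`-stable with `C_G(T^Γ) = T`. Then `N_G(T^Γ) = {n : n normalizes T and n⁻¹·(γ·n) ∈ T ∀γ}`;
in particular `N_G(T^Γ) ⊆ N_G(T)`. -/
theorem statement_7 {Γ G : Type*} [Group Γ] [Group G] [MulDistribMulAction Γ G]
    (T : Subgroup G) (hstab : ∀ (γ : Γ), ∀ t ∈ T, γ • t ∈ T)
    (hab : ∀ x ∈ T, ∀ y ∈ T, x * y = y * x)
    (hcent : Subgroup.centralizer ((fixedSub Γ T : Subgroup G) : Set G) = T) :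
    ((Subgroup.normalizer ((fixedSub Γ T : Subgroup G) : Set G) : Subgroup G) : Set G) =
      {n : G | n ∈ Subgroup.normalizer (T : Set G) ∧ ∀ γ : Γ, n⁻¹ * (γ • n) ∈ T} ∧
    Subgroup.normalizer ((fixedSub Γ T : Subgroup G) : Set G) ≤ Subgroup.normalizer (T : Set G) := by
  set S := fixedSub Γ T with hS
  -- conjugation by an element of N(S) sends S into S (one direction)
  have hconjS : ∀ n ∈ (Subgroup.normalizer (S : Set G)), ∀ s ∈ S, n⁻¹ * s * n ∈ S := by
    intro n hn s hs
    rw [Subgroup.mem_normalizer_iff] at hn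
    exact (hn (n⁻¹ * s * n)).mpr (by simpa [mul_assoc] using hs)
  -- forward: N(S) ≤ N(T)
  have fwdT : ∀ n ∈ (Subgroup.normalizer (S : Set G)), ∀ x ∈ T, n * x * n⁻¹ ∈ T := by
    intro n hn x hx
    rw [← hcent, Subgroup.mem_centralizer_iff]
    intro s hs
    have hs' : n⁻¹ * s * n ∈ S := hconjS n hn s hs
    rw [← hcent, Subgroup.mem_centralizer_iff] at hx
    have hc := hx _ hs'
    have h1 : s * (n * x * n⁻¹) = n * ((n⁻¹ * s * n) * x) * n⁻¹ := by group
    rw [h1, hc]; group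
  have fwdN : ∀ n ∈ (Subgroup.normalizer (S : Set G)), n ∈ (Subgroup.normalizer (T : Set G)) := by
    intro n hn
    rw [Subgroup.mem_normalizer_iff]
    intro x
    constructor
    · exact fun hx => fwdT n hn x hx
    · intro hx
      have := fwdT n⁻¹ ((Subgroup.normalizer (S : Set G)).inv_mem hn) _ hx
      simpa [mul_assoc] using this
  -- forward: the cocycle condition
  have fwdC : ∀ n ∈ (Subgroup.normalizer (S : Set G)), ∀ γ : Γ, n⁻¹ * (γ • n) ∈ T := by
    intro n hn γ
    rw [← hcent, Subgroup.mem_centralizer_iff]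
    intro s hs
    rw [Subgroup.mem_normalizer_iff] at hn
    have h1 : n * s * n⁻¹ ∈ S := (hn s).mp hs
    have h2 : γ • (n * s * n⁻¹) = n * s * n⁻¹ := h1.2 γ
    have h3 : (γ • n) * s * (γ • n)⁻¹ = n * s * n⁻¹ := by
      rw [← h2, smul_mul', smul_mul', smul_inv', hs.2 γ]
    have := congrArg (fun z => n⁻¹ * z * (γ • n)) h3
    simp only [mul_assoc, inv_mul_cancel_left, inv_mul_cancel, mul_one] at this
    simp [mul_assoc, this]
  -- backward: key conjugation statement
  have bwd : ∀ n : G, n ∈ (Subgroup.normalizer (T : Set G)) → (∀ γ : Γ, n⁻¹ * (γ • n) ∈ T) →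
      ∀ s ∈ S, n * s * n⁻¹ ∈ S := by
    intro n hnT hcoc s hs
    refine ⟨?_, ?_⟩
    · exact (Subgroup.mem_normalizer_iff.mp hnT s).mp hs.1
    · intro γ
      have ht : n⁻¹ * (γ • n) ∈ T := hcoc γ
      have hA : γ • n = n * (n⁻¹ * (γ • n)) := by group
      have hcomm : (n⁻¹ * (γ • n)) * s * (n⁻¹ * (γ • n))⁻¹ = s := by
        rw [hab _ ht _ hs.1]; group
      calc γ • (n * s * n⁻¹)
          = (γ • n) * s * (γ • n)⁻¹ := by rw [smul_mul', smul_mul', smul_inv', hs.2 γ]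
        _ = n * ((n⁻¹ * (γ • n)) * s * (n⁻¹ * (γ • n))⁻¹) * n⁻¹ := by rw [hA]; group
        _ = n * s * n⁻¹ := by rw [hcomm]
  have bwdN : ∀ n : G, n ∈ (Subgroup.normalizer (T : Set G)) → (∀ γ : Γ, n⁻¹ * (γ • n) ∈ T) →
      n ∈ (Subgroup.normalizer (S : Set G)) := by
    intro n hnT hcoc
    rw [Subgroup.mem_normalizer_iff]
    intro x
    constructor
    · exact fun hx => bwd n hnT hcoc x hx
    · intro hx
      have hnT' : n⁻¹ ∈ (Subgroup.normalizer (T : Set G)) := (Subgroup.normalizer (T : Set G)).inv_mem hnT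
      have hcoc' : ∀ γ : Γ, n⁻¹⁻¹ * (γ • n⁻¹) ∈ T := by
        intro γ
        have ht := hcoc γ
        have : n * (γ • n)⁻¹ = n * (n⁻¹ * (γ • n))⁻¹ * n⁻¹ := by group
        rw [smul_inv', inv_inv, this]
        exact (Subgroup.mem_normalizer_iff.mp hnT _).mp (T.inv_mem ht)
      have := bwd n⁻¹ hnT' hcoc' _ hx
      simpa [mul_assoc] using this
  constructor
  · ext n
    constructor
    · exact fun hn => ⟨fwdN n hn, fwdC n hn⟩
    · exact fun hn => bwdN n hn.1 hn.2
  · exact fun n hn => fwdN n hn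
end

section
/- Let A be a finite group, let W be a finite subgroup of the automorphism group of A, and let χ : A → ℂˣ be a group homomorphism such that the characters χ∘n⁻¹, for n ∈ W, are pairwise distinct. Suppose Y ⊆ A is a subset such that the function f(a) := ∑_{n ∈ W} χ(n⁻¹(a)) vanishes at every a ∈ A \ Y. Then |A| ≤ |Y|·|W|. Equivalently, if |Y|·|W| < |A|, then f is not identically zero on A \ Y. -/
/-- If `A` is a finite group, `W` a finite subgroup of `Aut(A)`, `χ : A → ℂˣ` a
character whose `W`-translates `χ ∘ n⁻¹` are pairwise distinct, and the function
`f a = ∑_{n ∈ W} χ(n⁻¹ a)` vanishes off a subset `Y ⊆ A`, then `|A| ≤ |Y| · |W|`. -/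
theorem statement_9 {A : Type*} [Group A] [Fintype A]
    (W : Subgroup (MulAut A)) [Fintype W] (χ : A →* ℂˣ)
    (hdist : ∀ n m : W, (∀ a : A, χ ((n : MulAut A)⁻¹ a) = χ ((m : MulAut A)⁻¹ a)) → n = m)
    (Y : Finset A)
    (hvanish : ∀ a : A, a ∉ Y → ∑ n : W, ((χ ((n : MulAut A)⁻¹ a) : ℂˣ) : ℂ) = 0) :
    Fintype.card A ≤ Y.card * Fintype.card W := by
  classical
  -- the translated characters
  set ψ : W → (A →* ℂˣ) := fun n => χ.comp ((n : MulAut A)⁻¹ : MulAut A).toMonoidHom with hψ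
  have hψapp : ∀ (n : W) (a : A), ψ n a = χ ((n : MulAut A)⁻¹ a) := fun n a => rfl
  set f : A → ℂ := fun a => ∑ n : W, ((ψ n a : ℂˣ) : ℂ) with hf
  -- values are on the unit circle
  have hnorm : ∀ (n : W) (a : A), ‖((ψ n a : ℂˣ) : ℂ)‖ = 1 := by
    intro n a
    refine Complex.norm_eq_one_of_pow_eq_one (n := Fintype.card A) ?_ Fintype.card_ne_zero
    have : (ψ n a) ^ Fintype.card A = 1 := by
      rw [← map_pow, pow_card_eq_one, map_one]
    calc ((ψ n a : ℂˣ) : ℂ) ^ Fintype.card A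
        = (((ψ n a) ^ Fintype.card A : ℂˣ) : ℂ) := by push_cast; ring
      _ = 1 := by rw [this]; simp
  have hconj : ∀ (n : W) (a : A),
      (starRingEnd ℂ) ((ψ n a : ℂˣ) : ℂ) = (((ψ n a)⁻¹ : ℂˣ) : ℂ) := by
    intro n a
    rw [← Complex.inv_eq_conj (hnorm n a)]
    push_cast
    ring
  -- orthogonality
  have horth : ∀ n m : W,
      ∑ a : A, ((ψ n a : ℂˣ) : ℂ) * (starRingEnd ℂ) ((ψ m a : ℂˣ) : ℂ)
        = if n = m then (Fintype.card A : ℂ) else 0 := by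
    intro n m
    have hsum : ∀ a : A, ((ψ n a : ℂˣ) : ℂ) * (starRingEnd ℂ) ((ψ m a : ℂˣ) : ℂ)
        = ((Units.coeHom ℂ).comp ((ψ n) * (ψ m)⁻¹) : A →* ℂ) a := by
      intro a
      rw [hconj]
      simp
    simp only [hsum]
    by_cases h : n = m
    · subst h
      simp [Finset.card_univ]
    · rw [if_neg h, sum_hom_units_eq_zero]
      intro hcontra
      apply h
      apply hdist
      intro a
      have := congrArg (fun g : A →* ℂ => g a) hcontra
      simp only [MonoidHom.comp_apply, MonoidHom.one_apply, Units.coeHom_apply,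
        MonoidHom.mul_apply, MonoidHom.inv_apply] at this
      have h2 : (ψ n a : ℂ) = ((ψ m a : ℂˣ) : ℂ) := by
        have hne : ((ψ m a : ℂˣ) : ℂ) ≠ 0 := Units.ne_zero _
        field_simp at this
        exact congrArg Units.val (mul_inv_eq_one.mp (Units.val_eq_one.mp this))
      have : ψ n a = ψ m a := Units.ext h2
      exact this
  -- total L² mass
  have hS : ∑ a : A, f a * (starRingEnd ℂ) (f a)
      = (Fintype.card W : ℂ) * (Fintype.card A : ℂ) := by
    have : ∀ a : A, f a * (starRingEnd ℂ) (f a)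
        = ∑ n : W, ∑ m : W, ((ψ n a : ℂˣ) : ℂ) * (starRingEnd ℂ) ((ψ m a : ℂˣ) : ℂ) := by
      intro a
      rw [hf]
      simp only [map_sum, Finset.sum_mul_sum]
    simp only [this]
    rw [Finset.sum_comm]
    refine Eq.trans (Finset.sum_congr rfl fun n _ => Finset.sum_comm) ?_
    simp only [horth]
    simp [Finset.card_univ]
  -- f vanishes off Y
  have hzero : ∀ a ∈ (Finset.univ : Finset A) \ Y, f a * (starRingEnd ℂ) (f a) = 0 := by
    intro a ha
    rw [Finset.mem_sdiff] at ha
    have : f a = 0 := hvanish a ha.2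
    rw [this]; simp
  have hsupp : ∑ a : A, f a * (starRingEnd ℂ) (f a)
      = ∑ a ∈ Y, f a * (starRingEnd ℂ) (f a) := by
    refine (Finset.sum_subset (Finset.subset_univ Y) ?_).symm
    intro a _ ha
    exact hzero a (Finset.mem_sdiff.mpr ⟨Finset.mem_univ a, ha⟩)
  -- pointwise bound
  have hfb : ∀ a : A, ‖f a‖ ≤ (Fintype.card W : ℝ) := by
    intro a
    calc ‖f a‖ ≤ ∑ n : W, ‖((ψ n a : ℂˣ) : ℂ)‖ := norm_sum_le _ _
      _ = (Fintype.card W : ℝ) := by simp [hnorm, Finset.card_univ]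
  -- real inequality
  have hreal : (Fintype.card W : ℝ) * (Fintype.card A : ℝ)
      ≤ (Y.card : ℝ) * ((Fintype.card W : ℝ) * (Fintype.card W : ℝ)) := by
    have h1 : ‖∑ a : A, f a * (starRingEnd ℂ) (f a)‖
        = (Fintype.card W : ℝ) * (Fintype.card A : ℝ) := by
      rw [hS]
      rw [← Nat.cast_mul, Complex.norm_natCast, Nat.cast_mul]
    calc (Fintype.card W : ℝ) * (Fintype.card A : ℝ)
        = ‖∑ a ∈ Y, f a * (starRingEnd ℂ) (f a)‖ := by rw [← h1, hsupp]
      _ ≤ ∑ a ∈ Y, ‖f a * (starRingEnd ℂ) (f a)‖ := norm_sum_le _ _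
      _ ≤ ∑ _a ∈ Y, (Fintype.card W : ℝ) * (Fintype.card W : ℝ) := by
          refine Finset.sum_le_sum fun a _ => ?_
          rw [norm_mul, RCLike.norm_conj]
          exact mul_le_mul (hfb a) (hfb a) (norm_nonneg _) (Nat.cast_nonneg _)
      _ = (Y.card : ℝ) * ((Fintype.card W : ℝ) * (Fintype.card W : ℝ)) := by
          rw [Finset.sum_const, nsmul_eq_mul]
  have hW : 0 < Fintype.card W := Fintype.card_pos
  have : Fintype.card A * Fintype.card W ≤ Y.card * Fintype.card W * Fintype.card W := by
    have h2 : ((Fintype.card A * Fintype.card W : ℕ) : ℝ)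
        ≤ ((Y.card * Fintype.card W * Fintype.card W : ℕ) : ℝ) := by
      push_cast
      nlinarith [hreal]
    exact_mod_cast h2
  exact Nat.le_of_mul_le_mul_right this hW
end

section
/- Let A be a finite group, let W be a finite group acting on A by automorphisms, and let χ₁, χ₂ : A → ℂˣ be group homomorphisms. If ∑_{n ∈ W} χ₁(n⁻¹·a) = ∑_{n ∈ W} χ₂(n⁻¹·a) for every a ∈ A, then there exists n' ∈ W such that χ₁ = χ₂ ∘ (n')⁻¹, i.e., χ₁ lies in the W-orbit of χ₂. -/
/-- If `A` is a finite group, `W` a finite group acting on `A` by automorphisms,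
and `χ₁, χ₂ : A → ℂˣ` are characters with the same Weyl-orbit sums
`∑_{n ∈ W} χ₁(n⁻¹·a) = ∑_{n ∈ W} χ₂(n⁻¹·a)` for all `a`, then `χ₁ = χ₂ ∘ (n')⁻¹` for some
`n' ∈ W`, i.e. `χ₁` lies in the `W`-orbit of `χ₂`. -/
theorem statement_10 {A W : Type*} [Group A] [Finite A] [Group W] [Fintype W]
    [MulDistribMulAction W A] (χ₁ χ₂ : A →* ℂˣ)
    (hsum : ∀ a : A,
      ∑ n : W, ((χ₁ (n⁻¹ • a) : ℂˣ) : ℂ) = ∑ n : W, ((χ₂ (n⁻¹ • a) : ℂˣ) : ℂ)) :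
    ∃ n' : W, ∀ a : A, χ₁ a = χ₂ (n'⁻¹ • a) := by
  classical
  -- characters as monoid homs into ℂ, twisted by n⁻¹
  let c : (A →* ℂˣ) → W → (A →* ℂ) := fun χ n =>
    (Units.coeHom ℂ).comp (χ.comp (MulDistribMulAction.toMonoidHom A (n⁻¹ : W)))
  have hc : ∀ χ n a, c χ n a = ((χ (n⁻¹ • a) : ℂˣ) : ℂ) := fun _ _ _ => rfl
  -- the finsupp of coefficients
  let l : (A →* ℂ) →₀ ℂ :=
    (∑ n : W, Finsupp.single (c χ₁ n) 1) - ∑ n : W, Finsupp.single (c χ₂ n) 1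
  have hli := linearIndependent_monoidHom A ℂ
  have hl0 : l = 0 := by
    rw [linearIndependent_iff] at hli
    apply hli
    rw [map_sub, map_sum, map_sum]
    simp only [Finsupp.linearCombination_single, one_smul]
    ext a
    simp only [Finset.sum_apply, MonoidHom.coe_coe, Pi.sub_apply, Pi.zero_apply, sub_eq_zero]
    exact hsum a
  have key : ∀ f : A →* ℂ, l f = 0 := fun f => by rw [hl0]; rfl
  have hχ : l (c χ₁ 1) = 0 := key _
  have hcoeff : ∀ χ : A →* ℂˣ, ((∑ n : W, Finsupp.single (c χ n) 1 : (A →* ℂ) →₀ ℂ)) (c χ₁ 1)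
      = ((Finset.univ.filter (fun n : W => c χ n = c χ₁ 1)).card : ℂ) := by
    intro χ
    rw [Finsupp.finset_sum_apply]
    rw [Finset.sum_congr rfl (fun n _ => Finsupp.single_apply)]
    simp [Finset.sum_ite_eq, Finset.filter_congr_decidable]
  have hl : ((Finset.univ.filter (fun n : W => c χ₁ n = c χ₁ 1)).card : ℂ)
      = ((Finset.univ.filter (fun n : W => c χ₂ n = c χ₁ 1)).card : ℂ) := by
    have := hχ
    simp only [l, Finsupp.sub_apply, hcoeff, sub_eq_zero] at this
    exact this
  have hcard : (Finset.univ.filter (fun n : W => c χ₂ n = c χ₁ 1)).card ≠ 0 := by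
    intro h
    rw [h] at hl
    have h1 : (1 : W) ∈ Finset.univ.filter (fun n : W => c χ₁ n = c χ₁ 1) := by
      simp
    have := Finset.card_pos.mpr ⟨1, h1⟩
    rw [Nat.cast_zero, Nat.cast_eq_zero] at hl
    omega
  obtain ⟨n', hn'⟩ := Finset.card_pos.mp (Nat.pos_of_ne_zero hcard)
  refine ⟨n', fun a => ?_⟩
  have h2 : c χ₂ n' = c χ₁ 1 := (Finset.mem_filter.mp hn').2
  have := congrFun (congrArg (fun f : A →* ℂ => (f : A → ℂ)) h2) a
  simp only [hc, inv_one, one_smul] at this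
  exact Units.ext this.symm
end
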